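/- Let h_{k+1,j} (0 ≤ j ≤ k) be arbitrary real coefficients and let y : ℕ → ℝⁿ follow the iteration y_{k+1} = y_k − Σ_{j=0}^{k} h_{k+1,j} ∇f(y_j). Define x_k = U⁻¹ y_k for all k. Then for every k ≥ 0, x_{k+1} = Σ_{j=0}^{k} h_{k+1,j} Φ(W x_j) + x_k − Σ_{j=0}^{k} h_{k+1,j} x_j, where Φ is applied entrywise. -/

import Mathlib

open scoped RealInnerProductSpace

/-- Matrix-vector multiplication on Euclidean space. -/
noncomputable def mvE {n : ℕ} (U : Matrix (Fin n) (Fin n) ℝ)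
    (v : EuclideanSpace ℝ (Fin n)) : EuclideanSpace ℝ (Fin n) :=
  WithLp.toLp 2 (U.mulVec v)

/-- Entrywise application of a scalar function to a vector. -/
noncomputable def appE {n : ℕ} (Φ : ℝ → ℝ)
    (v : EuclideanSpace ℝ (Fin n)) : EuclideanSpace ℝ (Fin n) :=
  WithLp.toLp 2 (fun i => Φ (v i))

/-! Writing `Uᵢ` for the `i`-th column of `U`, `f z = ‖z‖²/2 - ∑ᵢ Ψ ⟪Uᵢ, z⟫`, so
`∇f z = z - ∑ᵢ Φ ⟪Uᵢ, z⟫ • Uᵢ = z - U Φ(Uᵀ z)`. For symmetric invertible `U` this gives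
`U⁻¹ ∇f(y_j) = x_j - Φ(U y_j) = x_j - Φ(W x_j)`, and applying the linear map `U⁻¹` to the
recursion for `y` yields the recursion for `x`. -/

theorem hasGradientAt_half_norm_sq_sub_sum_comp_inner {F ι : Type*} [NormedAddCommGroup F]
    [InnerProductSpace ℝ F] [CompleteSpace F] [Fintype ι] {Φ Ψ : ℝ → ℝ}
    (hΨ : ∀ t, HasDerivAt Ψ (Φ t) t) (a : ι → F) (z : F) :
    HasGradientAt (fun z => ‖z‖ ^ 2 / 2 - ∑ i, Ψ ⟪a i, z⟫)
      (z - ∑ i, Φ ⟪a i, z⟫ • a i) z := by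
  rw [hasGradientAt_iff_hasFDerivAt]
  have hnorm := (hasStrictFDerivAt_norm_sq z).hasFDerivAt.mul_const (2⁻¹ : ℝ)
  have hsum := HasFDerivAt.fun_sum (u := Finset.univ) fun i _ =>
    (hΨ ⟪a i, z⟫).comp_hasFDerivAt z (innerSL ℝ (a i)).hasFDerivAt
  simp only [div_eq_mul_inv]
  refine (hnorm.sub hsum).congr_fderiv ?_
  ext w
  simp [real_inner_comm]

open scoped Matrix

section mvE

variable {n : ℕ}

theorem mvE_eq_toLpLin (A : Matrix (Fin n) (Fin n) ℝ) : mvE A = Matrix.toLpLin 2 2 A := rfl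

theorem mvE_mvE (A B : Matrix (Fin n) (Fin n) ℝ) (v : EuclideanSpace ℝ (Fin n)) :
    mvE A (mvE B v) = mvE (A * B) v := by
  simp [mvE, Matrix.mulVec_mulVec]

theorem mvE_one (v : EuclideanSpace ℝ (Fin n)) : mvE 1 v = v := by
  simp [mvE]

end mvE

theorem inner_toLp_transpose_apply {n : ℕ} (U : Matrix (Fin n) (Fin n) ℝ) (i : Fin n)
    (z : EuclideanSpace ℝ (Fin n)) :
    ⟪WithLp.toLp 2 (Uᵀ i), z⟫ = ∑ j, U j i * z j := by
  simp [PiLp.inner_apply, mul_comm]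

theorem sum_smul_toLp_transpose_apply {n : ℕ} (U : Matrix (Fin n) (Fin n) ℝ)
    (c : EuclideanSpace ℝ (Fin n)) :
    ∑ i, c i • WithLp.toLp 2 (Uᵀ i) = mvE U c := by
  ext j
  simp [mvE, Matrix.mulVec, dotProduct, mul_comm]

theorem gradient_half_norm_sq_sub_sum_comp_transpose {n : ℕ} (U : Matrix (Fin n) (Fin n) ℝ)
    {Φ Ψ : ℝ → ℝ} (hΨ : ∀ t, HasDerivAt Ψ (Φ t) t) (z : EuclideanSpace ℝ (Fin n)) :
    gradient (fun z : EuclideanSpace ℝ (Fin n) => ‖z‖ ^ 2 / 2 - ∑ i, Ψ (∑ j, U j i * z j)) z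
      = z - mvE U (appE Φ (mvE Uᵀ z)) := by
  have hgrad := hasGradientAt_half_norm_sq_sub_sum_comp_inner hΨ (fun i => WithLp.toLp 2 (Uᵀ i)) z
  simp only [inner_toLp_transpose_apply] at hgrad
  rw [hgrad.gradient, ← sum_smul_toLp_transpose_apply]
  simp [appE, mvE, Matrix.mulVec, dotProduct]

theorem agd2_sequence_general (n : ℕ)
    (U : Matrix (Fin n) (Fin n) ℝ) (hU : U.IsSymm) (hUinv : IsUnit U.det)
    (W : Matrix (Fin n) (Fin n) ℝ) (hW : W = U ^ 2)
    (Φ Ψ : ℝ → ℝ) (hΨ : ∀ x : ℝ, HasDerivAt Ψ (Φ x) x)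
    (f : EuclideanSpace ℝ (Fin n) → ℝ)
    (hf : ∀ z : EuclideanSpace ℝ (Fin n),
      f z = ‖z‖ ^ 2 / 2 - ∑ i, Ψ (∑ j, U j i * z j))
    (h : ℕ → ℕ → ℝ) (y x : ℕ → EuclideanSpace ℝ (Fin n))
    (hy : ∀ k : ℕ, y (k + 1) =
      y k - ∑ j ∈ Finset.range (k + 1), h (k + 1) j • gradient f (y j))
    (hx : ∀ k : ℕ, x k = mvE U⁻¹ (y k)) :
    ∀ k : ℕ, x (k + 1) =
      (∑ j ∈ Finset.range (k + 1), h (k + 1) j • appE Φ (mvE W (x j))) + x k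
        - ∑ j ∈ Finset.range (k + 1), h (k + 1) j • x j := by
  intro k
  have hWx : ∀ j, mvE W (x j) = mvE U (y j) := fun j => by
    rw [hx, mvE_mvE, hW, sq, Matrix.mul_assoc, Matrix.mul_nonsing_inv U hUinv, Matrix.mul_one]
  have hgrad : ∀ j, mvE U⁻¹ (gradient f (y j)) = x j - appE Φ (mvE W (x j)) := fun j => by
    rw [funext hf, gradient_half_norm_sq_sub_sum_comp_transpose U hΨ, hU.eq, mvE_eq_toLpLin,
      map_sub, ← mvE_eq_toLpLin, mvE_mvE, Matrix.nonsing_inv_mul U hUinv, mvE_one, hWx, hx]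
  rw [hx, hy, mvE_eq_toLpLin, map_sub, map_sum]
  simp only [map_smul, ← mvE_eq_toLpLin, hgrad, ← hx, smul_sub, Finset.sum_sub_distrib]
  abel

/-- if `y` follows the iteration
`y_{k+1} = y_k − ∑_{j=0}^{k} h_{k+1,j} ∇f(y_j)` with arbitrary real coefficients
`h`, where `f(z) = ‖z‖²/2 − ∑ᵢ Ψ(Uᵢᵀ z)`, and `x_k = U⁻¹ y_k`, then for every
`k ≥ 0`, `x_{k+1} = ∑_{j=0}^{k} h_{k+1,j} Φ(W x_j) + x_k − ∑_{j=0}^{k} h_{k+1,j} x_j`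
with `W = U²` and `Φ` applied entrywise. -/
theorem agd2_sequence (n : ℕ) (hn : 0 < n)
    (U : Matrix (Fin n) (Fin n) ℝ) (hU : U.IsSymm) (hUinv : IsUnit U.det)
    (W : Matrix (Fin n) (Fin n) ℝ) (hW : W = U ^ 2)
    (Φ Ψ : ℝ → ℝ) (hΨ : ∀ x : ℝ, HasDerivAt Ψ (Φ x) x)
    (f : EuclideanSpace ℝ (Fin n) → ℝ)
    (hf : ∀ z : EuclideanSpace ℝ (Fin n),
      f z = ‖z‖ ^ 2 / 2 - ∑ i, Ψ (∑ j, U j i * z j))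
    (h : ℕ → ℕ → ℝ) (y x : ℕ → EuclideanSpace ℝ (Fin n))
    (hy : ∀ k : ℕ, y (k + 1) =
      y k - ∑ j ∈ Finset.range (k + 1), h (k + 1) j • gradient f (y j))
    (hx : ∀ k : ℕ, x k = mvE U⁻¹ (y k)) :
    ∀ k : ℕ, x (k + 1) =
      (∑ j ∈ Finset.range (k + 1), h (k + 1) j • appE Φ (mvE W (x j))) + x k
        - ∑ j ∈ Finset.range (k + 1), h (k + 1) j • x j :=
  agd2_sequence_general n U hU hUinv W hW Φ Ψ hΨ f hf h y x hy hx
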